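/- arXiv:1802.05213 — 3 statements merged into one kernel-verified Lean document; each statement's English description precedes it below -/
import Mathlib

section
/- Let W be a Coxeter group with Coxeter generating set S and X ⊆ S. Then the standard parabolic subgroup W_X has 1-bounded projections in the Cayley graph of (W,S): for any w, w' ∈ W with d_S(w,w') = 1, the diameter of π_{W_X}(w) ∪ π_{W_X}(w') is at most 1. -/
/-- The standard parabolic subgroup `W_X`. -/
def standardParabolic {B : Type*} {W : Type*} [Group W] {M : CoxeterMatrix B}
    (cs : CoxeterSystem M W) (X : Set B) : Subgroup W :=
  Subgroup.closure (cs.simple '' X)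

/-- The closest point projection of `w` onto `W_X` for the word metric
`d_S(a,b) = ℓ(a⁻¹ b)`. -/
def parabolicProj {B : Type*} {W : Type*} [Group W] {M : CoxeterMatrix B}
    (cs : CoxeterSystem M W) (X : Set B) (w : W) : Set W :=
  {z | z ∈ standardParabolic cs X ∧
    ∀ z' ∈ standardParabolic cs X, cs.length (z⁻¹ * w) ≤ cs.length (z'⁻¹ * w)}

namespace CoxeterBounded

open CoxeterSystem List

attribute [local instance] Classical.propDecidable

set_option linter.unusedSectionVars false

variable {B : Type*} {W : Type*} [Group W] {M : CoxeterMatrix B} (cs : CoxeterSystem M W)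

local prefix:100 "σ" => cs.simple
local prefix:100 "π" => cs.wordProd
local prefix:100 "ℓ" => cs.length
local prefix:100 "ris" => cs.rightInvSeq
local prefix:100 "lis" => cs.leftInvSeq

/-- parity count of occurrences of `t` in a list -/
noncomputable def cnt (t : W) (l : List W) : ZMod 2 :=
  (l.map (fun u => if u = t then (1 : ZMod 2) else 0)).sum

variable {cs}

lemma cnt_nil (t : W) : cnt t ([] : List W) = 0 := rfl

lemma cnt_cons (t a : W) (l : List W) :
    cnt t (a :: l) = (if a = t then (1 : ZMod 2) else 0) + cnt t l := by
  simp [cnt]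

lemma cnt_append (t : W) (l l' : List W) :
    cnt t (l ++ l') = cnt t l + cnt t l' := by
  simp [cnt]

lemma cnt_reverse (t : W) (l : List W) : cnt t l.reverse = cnt t l := by
  simp [cnt, List.sum_reverse]

lemma cnt_map_conj (t g : W) (l : List W) :
    cnt t (l.map (MulAut.conj g)) = cnt (g⁻¹ * t * g) l := by
  induction l with
  | nil => rfl
  | cons a l ih =>
      rw [List.map_cons, cnt_cons, cnt_cons, ih]
      congr 1
      have : (MulAut.conj g a = t) ↔ (a = g⁻¹ * t * g) := by
        rw [MulAut.conj_apply]
        constructor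
        · intro h; rw [← h]; group
        · intro h; rw [h]; group
      simp only [this]

lemma cnt_eq_zero_of_not_mem {t : W} {l : List W} (hm : t ∉ l) : cnt t l = 0 := by
  induction l with
  | nil => rfl
  | cons a l ih =>
      rw [cnt_cons, if_neg (by rintro rfl; exact hm List.mem_cons_self),
        zero_add]
      exact ih (fun h' => hm (List.mem_cons_of_mem _ h'))

lemma mem_of_cnt_ne_zero {t : W} {l : List W} (h : cnt t l ≠ 0) : t ∈ l := by
  by_contra hm
  exact h (cnt_eq_zero_of_not_mem hm)

lemma cnt_eq_sum_range (t : W) (l : List W) :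
    cnt t l = ∑ n ∈ Finset.range l.length,
      (if l.getD n 1 = t then (1 : ZMod 2) else 0) := by
  induction l with
  | nil => simp [cnt]
  | cons a l ih =>
      rw [cnt_cons, ih, List.length_cons, Finset.sum_range_succ']
      simp [add_comm]


variable (cs)

private noncomputable def etaFun (i : B) : W × ZMod 2 → W × ZMod 2 :=
  fun x => (σ i * x.1 * σ i, x.2 + if x.1 = σ i then 1 else 0)

lemma etaFun_involutive (i : B) : Function.Involutive (etaFun cs i) := by
  rintro ⟨t, ε⟩
  have h1 : σ i * (σ i * t * σ i) * σ i = t := by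
    group
    simp [cs.simple_mul_simple_self]
  have h2 : (σ i * t * σ i = σ i) ↔ (t = σ i) := by
    constructor
    · intro h
      have h' := congrArg (fun u => σ i * u * σ i) h
      simp only [h1] at h'
      rw [h', mul_assoc, cs.simple_mul_simple_self, mul_one]
    · rintro rfl
      rw [cs.simple_mul_simple_self, one_mul]
  simp only [etaFun, h1, h2]
  ext
  · rfl
  · simp only
    rcases em (t = σ i) with h | h
    · simp [h, add_assoc, CharTwo.add_self_eq_zero]
    · simp [h]

/-- The permutation of `W × ZMod 2` associated to the simple reflection `i`. -/
noncomputable def eta (i : B) : Equiv.Perm (W × ZMod 2) :=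
  (etaFun_involutive cs i).toPerm

lemma eta_apply (i : B) (t : W) (ε : ZMod 2) :
    eta cs i (t, ε) = (σ i * t * σ i, ε + if t = σ i then 1 else 0) := rfl


lemma prod_map_eta_apply (ω : List B) (t : W) (ε : ZMod 2) :
    ((ω.map (eta cs)).prod) (t, ε) = (π ω * t * (π ω)⁻¹, ε + cnt t (ris ω)) := by
  induction ω generalizing ε with
  | nil => simp [cnt_nil]
  | cons i ω ih =>
      rw [List.map_cons, List.prod_cons, Equiv.Perm.mul_apply, ih, eta_apply,
        CoxeterSystem.rightInvSeq, cnt_cons, cs.wordProd_cons]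
      have hiff : (π ω * t * (π ω)⁻¹ = σ i) ↔ ((π ω)⁻¹ * σ i * π ω = t) := by
        constructor
        · intro h; rw [← h]; group
        · intro h; rw [← h]; group
      ext
      · simp only [mul_inv_rev, cs.inv_simple]
        group
      · simp only
        rw [if_congr hiff rfl rfl]
        ring



lemma sum_range_add (F : ℕ → ZMod 2) (a b : ℕ) :
    ∑ n ∈ Finset.range (a + b), F n
      = (∑ n ∈ Finset.range a, F n) + ∑ n ∈ Finset.range b, F (a + n) := by
  induction b with
  | zero => simp
  | succ b ih => rw [← Nat.add_assoc, Finset.sum_range_succ, ih, Finset.sum_range_succ]; ring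

lemma sum_range_two_mul (F : ℕ → ZMod 2) (m : ℕ) :
    ∑ n ∈ Finset.range (2 * m), F n
      = ∑ k ∈ Finset.range m, (F (2 * k) + F (2 * k + 1)) := by
  induction m with
  | zero => simp
  | succ m ih =>
      rw [Nat.mul_succ, Finset.sum_range_succ, Finset.sum_range_succ,
        Finset.sum_range_succ, ih]
      ring

lemma sum_periodic (K : ℕ → ZMod 2) (m : ℕ) (h : ∀ n, K (n + m) = K n) :
    ∑ n ∈ Finset.range (2 * m), K n = 0 := by
  rw [two_mul, sum_range_add]
  have h' : ∀ n, K (m + n) = K n := fun n => by rw [Nat.add_comm]; exact h n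
  simp only [h']
  exact CharTwo.add_self_eq_zero _

lemma eta_liftable : M.IsLiftable (eta cs) := by
  intro i j
  rcases Nat.eq_zero_or_pos (M i j) with h0 | _
  · rw [h0, pow_zero]
  set m := M i j with hm
  set g : W := σ i * σ j with hgdef
  have hg : g ^ m = 1 := cs.simple_mul_simple_pow i j
  have hgi : g⁻¹ = σ j * σ i := by
    rw [hgdef, mul_inv_rev, cs.inv_simple, cs.inv_simple]
  have hsjg : σ j * g * σ j = g⁻¹ := by
    rw [hgdef, hgi]
    simp only [mul_assoc, cs.simple_mul_simple_self, mul_one]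
  have hsig : σ i * g * σ i = g⁻¹ := by
    rw [hgdef, hgi]
    simp only [← mul_assoc, cs.simple_mul_simple_self, one_mul]
  have hgsj : g * σ j = σ i := by
    rw [hgdef, mul_assoc, cs.simple_mul_simple_self, mul_one]
  have hconj : ∀ (c : W), c * c = 1 → c * g * c = g⁻¹ →
      ∀ k : ℕ, c * g ^ k * c = (g ^ k)⁻¹ := by
    intro c hc2 hc k
    induction k with
    | zero => simpa using hc2
    | succ k ih =>
        have hcancel : ∀ x : W, c * (c * x) = x := fun x => by
          rw [← mul_assoc, hc2, one_mul]
        have key : c * g ^ (k + 1) * c = (c * g ^ k * c) * (c * g * c) := by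
          rw [pow_succ]
          simp only [mul_assoc, hcancel]
        rw [key, ih, hc, ← mul_inv_rev, ← pow_succ']
  have hconjj := hconj (σ j) (cs.simple_mul_simple_self j) hsjg
  have hconji := hconj (σ i) (cs.simple_mul_simple_self i) hsig
  have hswap : ∀ (c : W), (∀ k : ℕ, c * g ^ k * c = (g ^ k)⁻¹) → c * c = 1 →
      ∀ k : ℕ, c * g ^ k = (g ^ k)⁻¹ * c := by
    intro c hck hc2 k
    have h := congrArg (fun x => x * c) (hck k)
    have h : c * g ^ k * c * c = (g ^ k)⁻¹ * c := h
    rwa [mul_assoc (c * g ^ k) c c, hc2, mul_one] at h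
  have hpow2inv : ∀ k : ℕ, k ≤ m → (g ^ (2*k))⁻¹ = g ^ (2*(m-k)) := by
    intro k hk
    symm
    apply eq_inv_of_mul_eq_one_left
    rw [← pow_add, show 2*(m-k) + 2*k = m * 2 by omega, pow_mul, hg, one_pow]
  have hRj : ∀ k : ℕ, k ≤ m → (g ^ k)⁻¹ * σ j * g ^ k = g ^ (2*(m-k)) * σ j := by
    intro k hk
    rw [mul_assoc, hswap (σ j) hconjj (cs.simple_mul_simple_self j) k, ← mul_assoc,
      ← mul_inv_rev, ← pow_add, ← two_mul, hpow2inv k hk]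
  have hRi : ∀ k : ℕ, k ≤ m → (g ^ k)⁻¹ * σ i * g ^ k = g ^ (2*(m-k)+1) * σ j := by
    intro k hk
    rw [mul_assoc, hswap (σ i) hconji (cs.simple_mul_simple_self i) k, ← mul_assoc,
      ← mul_inv_rev, ← pow_add, ← two_mul, hpow2inv k hk, ← hgsj, ← mul_assoc, ← pow_succ]
  have hc1 : ∀ (t : W) (ε : ZMod 2), (eta cs i * eta cs j) (t, ε)
      = (g * t * g⁻¹, ε + ((if t = σ j then (1:ZMod 2) else 0)
          + if t = σ j * σ i * σ j then 1 else 0)) := by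
    intro t ε
    rw [Equiv.Perm.mul_apply, eta_apply, eta_apply]
    refine Prod.ext ?_ ?_
    · show σ i * (σ j * t * σ j) * σ i = g * t * g⁻¹
      rw [hgdef, hgi]
      simp only [mul_assoc]
    · show (ε + if t = σ j then (1:ZMod 2) else 0)
          + (if σ j * t * σ j = σ i then 1 else 0) = _
      have hiff : (σ j * t * σ j = σ i) ↔ (t = σ j * σ i * σ j) := by
        constructor
        · intro h
          rw [← h]
          simp only [mul_assoc, cs.simple_mul_simple_cancel_left]
          rw [cs.simple_mul_simple_self, mul_one]
        · intro h
          rw [h]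
          simp only [mul_assoc, cs.simple_mul_simple_cancel_left]
          rw [cs.simple_mul_simple_self, mul_one]
      rw [if_congr hiff rfl rfl, add_assoc]
  have hshiftL : ∀ (k : ℕ) (t : W), g ^ k * (g * t * g⁻¹) * (g ^ k)⁻¹
      = g ^ (k+1) * t * (g ^ (k+1))⁻¹ := by
    intro k t
    rw [pow_succ, mul_inv_rev (g ^ k) g]
    simp only [mul_assoc]
  have hstep : ∀ (k : ℕ) (t : W), g * (g ^ k * t * (g ^ k)⁻¹) * g⁻¹
      = g ^ (k+1) * t * (g ^ (k+1))⁻¹ := by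
    intro k t
    rw [pow_succ', mul_inv_rev g (g ^ k)]
    simp only [mul_assoc]
  have hpowformula : ∀ (n : ℕ) (t : W) (ε : ZMod 2),
      ((eta cs i * eta cs j) ^ n) (t, ε)
        = (g ^ n * t * (g ^ n)⁻¹,
            ε + ∑ k ∈ Finset.range n,
              ((if g ^ k * t * (g ^ k)⁻¹ = σ j then (1:ZMod 2) else 0)
                + if g ^ k * t * (g ^ k)⁻¹ = σ j * σ i * σ j then 1 else 0)) := by
    intro n
    induction n with
    | zero => intro t ε; simp
    | succ n ih =>
        intro t ε
        rw [pow_succ, Equiv.Perm.mul_apply, hc1, ih]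
        refine Prod.ext ?_ ?_
        · exact hshiftL n t
        · show (ε + _) + _ = ε + _
          simp only [hshiftL]
          rw [Finset.sum_range_succ' (fun k =>
            ((if g ^ k * t * (g ^ k)⁻¹ = σ j then (1:ZMod 2) else 0)
              + if g ^ k * t * (g ^ k)⁻¹ = σ j * σ i * σ j then 1 else 0)) n]
          simp only [pow_zero, one_mul, inv_one, mul_one]
          ring
  apply Equiv.ext
  rintro ⟨t, ε⟩
  rw [hpowformula m t ε, hg]
  have hS : (∑ k ∈ Finset.range m,
      ((if g ^ k * t * (g ^ k)⁻¹ = σ j then (1:ZMod 2) else 0)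
        + if g ^ k * t * (g ^ k)⁻¹ = σ j * σ i * σ j then 1 else 0)) = 0 := by
    have hgx : g * (σ j * σ i * σ j) * g⁻¹ = σ i := by
      rw [hgdef, hgi]
      simp only [mul_assoc, cs.simple_mul_simple_cancel_left]
    have step1 : ∀ k : ℕ,
        (if g ^ k * t * (g ^ k)⁻¹ = σ j * σ i * σ j then (1:ZMod 2) else 0)
          = (if g ^ (k+1) * t * (g ^ (k+1))⁻¹ = σ i then 1 else 0) := by
      intro k
      refine if_congr ?_ rfl rfl
      constructor
      · intro h
        rw [← hstep k t, h, hgx]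
      · intro h
        have h2 : g * (g ^ k * t * (g ^ k)⁻¹) * g⁻¹
            = g * (σ j * σ i * σ j) * g⁻¹ := by rw [hgx, hstep k t, h]
        exact mul_left_cancel (mul_right_cancel h2)
    have step2 : (∑ k ∈ Finset.range m,
        (if g ^ (k+1) * t * (g ^ (k+1))⁻¹ = σ i then (1:ZMod 2) else 0))
          = ∑ k ∈ Finset.range m,
            (if g ^ k * t * (g ^ k)⁻¹ = σ i then (1:ZMod 2) else 0) := by
      set F : ℕ → ZMod 2 :=
        fun k => if g ^ k * t * (g ^ k)⁻¹ = σ i then 1 else 0 with hF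
      have h1 := Finset.sum_range_succ' F m
      have h2 := Finset.sum_range_succ F m
      have h3 : F m = F 0 := by simp [hF, hg]
      have h4 := h1.symm.trans h2
      rw [h3] at h4
      exact add_right_cancel h4
    rw [Finset.sum_add_distrib]
    have e2 : (∑ k ∈ Finset.range m,
        (if g ^ k * t * (g ^ k)⁻¹ = σ j * σ i * σ j then (1:ZMod 2) else 0))
          = ∑ k ∈ Finset.range m,
              (if g ^ k * t * (g ^ k)⁻¹ = σ i then (1:ZMod 2) else 0) := by
      rw [Finset.sum_congr rfl (fun k _ => step1 k), step2]
    rw [e2, ← Finset.sum_add_distrib]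
    set F : ℕ → ZMod 2 := fun n => if t = g ^ (n+2) * σ j then 1 else 0 with hF
    have e3 : ∀ k ∈ Finset.range m,
        ((if g ^ k * t * (g ^ k)⁻¹ = σ j then (1:ZMod 2) else 0)
          + if g ^ k * t * (g ^ k)⁻¹ = σ i then 1 else 0)
            = F (2*(m - 1 - k)) + F (2*(m - 1 - k)+1) := by
      intro k hk
      rw [Finset.mem_range] at hk
      have hk' : k ≤ m := hk.le
      simp only [hF]
      have hA : (g ^ k * t * (g ^ k)⁻¹ = σ j) ↔ (t = g ^ (2*(m-1-k)+2) * σ j) := by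
        rw [show 2*(m-1-k)+2 = 2*(m-k) by omega, ← hRj k hk']
        constructor
        · intro h; rw [← h]; group
        · intro h; rw [h]; group
      have hB : (g ^ k * t * (g ^ k)⁻¹ = σ i) ↔ (t = g ^ (2*(m-1-k)+1+2) * σ j) := by
        rw [show 2*(m-1-k)+1+2 = 2*(m-k)+1 by omega, ← hRi k hk']
        constructor
        · intro h; rw [← h]; group
        · intro h; rw [h]; group
      rw [if_congr hA rfl rfl, if_congr hB rfl rfl]
    rw [Finset.sum_congr rfl e3]
    have hrefl := Finset.sum_range_reflect (fun k' => F (2*k') + F (2*k'+1)) m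
    have hper : ∑ n ∈ Finset.range (2*m), F n = 0 := sum_periodic F m (fun n => by
      simp only [hF]
      rw [show n + m + 2 = (n+2) + m by omega, pow_add, hg, mul_one])
    exact hrefl.trans ((sum_range_two_mul F m).symm.trans hper)
  rw [hS, add_zero]
  refine Prod.ext ?_ ?_
  · simp
  · rfl

/-- The reflection-parity representation of `W`. -/
noncomputable def prep : W →* Equiv.Perm (W × ZMod 2) :=
  cs.lift ⟨eta cs, eta_liftable cs⟩

lemma prep_simple (i : B) : prep cs (σ i) = eta cs i :=
  cs.lift_apply_simple (eta_liftable cs) i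

lemma prep_wordProd (ω : List B) : prep cs (π ω) = (ω.map (eta cs)).prod := by
  induction ω with
  | nil => simp [cs.wordProd_nil]
  | cons b ω ih =>
      rw [cs.wordProd_cons, map_mul, prep_simple, ih, List.map_cons, List.prod_cons]

lemma cnt_ris_invariant {ω ω' : List B} (h : π ω = π ω') (t : W) :
    cnt t (ris ω) = cnt t (ris ω') := by
  have h1 := prod_map_eta_apply (cs := cs) ω t 0
  have h2 := prod_map_eta_apply (cs := cs) ω' t 0
  rw [← prep_wordProd] at h1 h2
  rw [h] at h1
  have h3 := congrArg Prod.snd (h1.symm.trans h2)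
  simpa using h3

lemma rightInvSeq_append (α β : List B) :
    ris (α ++ β) = (cs.rightInvSeq α).map (MulAut.conj (π β)⁻¹) ++ ris β := by
  induction α with
  | nil => simp
  | cons a α ih =>
      rw [List.cons_append, CoxeterSystem.rightInvSeq, CoxeterSystem.rightInvSeq,
        List.map_cons, List.cons_append, ih]
      congr 1
      rw [cs.wordProd_append, MulAut.conj_apply]
      simp only [mul_inv_rev, inv_inv]
      group

lemma cnt_ris_palindrome (c : B) (ρ : List B) :
    cnt (π ρ * σ c * (π ρ)⁻¹) (ris (ρ ++ (c :: ρ.reverse))) = 1 := by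
  induction ρ with
  | nil =>
      simp only [List.nil_append, List.reverse_nil, cs.wordProd_nil, one_mul, inv_one, mul_one]
      rw [cs.rightInvSeq_singleton, cnt_cons, if_pos rfl, cnt_nil, add_zero]
  | cons b ρ' ih =>
      set t' : W := π ρ' * σ c * (π ρ')⁻¹ with ht'def
      have ht2 : t' * t' = 1 := by
        rw [ht'def]
        simp only [mul_assoc, inv_mul_cancel_left, cs.simple_mul_simple_cancel_left,
          mul_inv_cancel]
      have hti : t'⁻¹ = t' := inv_eq_of_mul_eq_one_right ht2
      set τ' := ρ' ++ (c :: ρ'.reverse) with hτ'def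
      have hπτ' : π τ' = t' := by
        rw [hτ'def, cs.wordProd_append, cs.wordProd_cons, cs.wordProd_reverse, ht'def,
          mul_assoc]
      have hτ : (b :: ρ') ++ (c :: (b :: ρ').reverse) = b :: (τ'.concat b) := by
        simp [hτ'def]
      have ht : π (b :: ρ') * σ c * (π (b :: ρ'))⁻¹ = σ b * t' * σ b := by
        rw [cs.wordProd_cons, mul_inv_rev, cs.inv_simple, ht'def]
        simp only [mul_assoc]
      rw [hτ, ht]
      set t : W := σ b * t' * σ b with htdef
      rw [CoxeterSystem.rightInvSeq, cs.rightInvSeq_concat]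
      simp only [List.concat_eq_append]
      rw [cnt_cons, cnt_append, cnt_cons, cnt_nil, add_zero, cnt_map_conj]
      have hmid : (σ b)⁻¹ * t * σ b = t' := by
        rw [htdef, cs.inv_simple]
        simp only [← mul_assoc, cs.simple_mul_simple_self, one_mul,
          cs.simple_mul_simple_cancel_right]
      rw [hmid, ih]
      have hq : π (τ' ++ [b]) = t' * σ b := by
        rw [cs.wordProd_append, hπτ', cs.wordProd_singleton]
      have hcond : (π (τ' ++ [b]))⁻¹ * σ b * π (τ' ++ [b])
          = σ b * (t' * (σ b * (t' * σ b))) := by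
        rw [hq, mul_inv_rev, cs.inv_simple, hti]
        simp only [mul_assoc]
      rw [hcond]
      have hiff1 : (σ b = t) ↔ (t' = σ b) := by
        rw [htdef]
        constructor
        · intro h
          have h1 : σ b * (1 : W) = σ b * (t' * σ b) := by
            rw [mul_one, ← mul_assoc]; exact h
          have h2 : t' * σ b = 1 := (mul_left_cancel h1).symm
          rw [eq_inv_of_mul_eq_one_left h2, cs.inv_simple]
        · intro h
          rw [h, mul_assoc, cs.simple_mul_simple_self, mul_one]
      have hA : (σ b * (t' * (σ b * (t' * σ b))) = t) ↔ (t' = σ b) := by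
        constructor
        · intro h
          have h' : σ b * (t' * (σ b * (t' * σ b))) = σ b * (t' * σ b) :=
            h.trans (by rw [htdef, mul_assoc])
          have h1 := mul_left_cancel h'
          have h2 := mul_left_cancel h1
          have h3 : σ b * (t' * σ b) = σ b * 1 := by rw [mul_one]; exact h2
          have h4 := mul_left_cancel h3
          rw [eq_inv_of_mul_eq_one_left h4, cs.inv_simple]
        · intro h
          rw [htdef, h]
          simp only [mul_assoc, cs.simple_mul_simple_cancel_left,
            cs.simple_mul_simple_self, mul_one, one_mul]
      rw [if_congr (hA.trans hiff1.symm) rfl rfl]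
      rcases em (σ b = t) with hbt | hbt
      · simp only [if_pos hbt]; decide
      · simp only [if_neg hbt]; decide

lemma cnt_ris_of_lt {t : W} (ht : cs.IsReflection t) {ω : List B}
    (hlt : ℓ (π ω * t) < ℓ (π ω)) : cnt t (ris ω) = 1 := by
  obtain ⟨p, c, htpc⟩ := ht
  obtain ⟨ρ, _, hp⟩ := cs.exists_reduced_word p
  obtain ⟨μ, hμred, hμ⟩ := cs.exists_reduced_word' (π ω * t)
  have htt : t * t = 1 := CoxeterSystem.IsReflection.mul_self ⟨p, c, htpc⟩
  have hτprod : π (ρ ++ (c :: ρ.reverse)) = t := by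
    rw [cs.wordProd_append, cs.wordProd_cons, cs.wordProd_reverse, htpc, ← hp, mul_assoc]
  have hword : π (μ ++ (ρ ++ (c :: ρ.reverse))) = π ω := by
    rw [cs.wordProd_append, hτprod, ← hμ, mul_assoc, htt, mul_one]
  have h1 := cnt_ris_invariant (cs := cs) hword t
  rw [rightInvSeq_append, cnt_append, cnt_map_conj] at h1
  have hti : t⁻¹ = t := inv_eq_of_mul_eq_one_right htt
  have hμcnt : cnt ((((π (ρ ++ (c :: ρ.reverse)))⁻¹)⁻¹) * t * (π (ρ ++ (c :: ρ.reverse)))⁻¹)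
      (cs.rightInvSeq μ) = 0 := by
    rw [hτprod, inv_inv]
    have heq : t * t * t⁻¹ = t := by rw [hti, htt, one_mul]
    rw [heq]
    apply cnt_eq_zero_of_not_mem
    intro hmem
    have hinv := cs.isRightInversion_of_mem_rightInvSeq hμred hmem
    have h2 := hinv.2
    rw [← hμ, mul_assoc, htt, mul_one] at h2
    omega
  rw [hμcnt, zero_add] at h1
  have hpal := cnt_ris_palindrome (cs := cs) c ρ
  rw [← hp, ← htpc] at hpal
  rw [← h1, hpal]

lemma strong_exchange_right {t : W} (ht : cs.IsReflection t) {ω : List B}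
    (hlt : ℓ (π ω * t) < ℓ (π ω)) :
    ∃ j < ω.length, π ω * t = π (ω.eraseIdx j) := by
  have h1 : cnt t (ris ω) = 1 := cnt_ris_of_lt cs ht hlt
  have hmem : t ∈ ris ω := mem_of_cnt_ne_zero (by rw [h1]; decide)
  obtain ⟨j, hj, hget⟩ := List.mem_iff_getElem.mp hmem
  rw [cs.length_rightInvSeq] at hj
  refine ⟨j, hj, ?_⟩
  have hgd : (cs.rightInvSeq ω).getD j 1 = t := by
    rw [List.getD_eq_getElem _ 1 (by rwa [cs.length_rightInvSeq])]
    exact hget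
  rw [← hgd]
  exact cs.wordProd_mul_getD_rightInvSeq ω j

lemma exists_reduced_subword (ω : List B) :
    ∃ ω', cs.IsReduced ω' ∧ π ω' = π ω ∧ ∀ b ∈ ω', b ∈ ω := by
  generalize hn : ω.length = n
  induction n using Nat.strong_induction_on generalizing ω with
  | _ n IH =>
  by_cases hred : cs.IsReduced ω
  · exact ⟨ω, hred, rfl, fun b hb => hb⟩
  have hne : ω ≠ [] := by
    rintro rfl
    exact hred (by simp [CoxeterSystem.IsReduced])
  have hlen1 : 1 ≤ ω.length := by
    cases ω
    · exact absurd rfl hne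
    · simp
  have hPex : ∃ k, ¬ cs.IsReduced (ω.take (k+1)) :=
    ⟨ω.length - 1, by rwa [show ω.length - 1 + 1 = ω.length by omega, List.take_length]⟩
  set k := Nat.find hPex with hkdef
  have hk : ¬ cs.IsReduced (ω.take (k+1)) := Nat.find_spec hPex
  have hkle : k ≤ ω.length - 1 := Nat.find_min' hPex
    (by rwa [show ω.length - 1 + 1 = ω.length by omega, List.take_length])
  have hklen : k < ω.length := by omega
  have htk : cs.IsReduced (ω.take k) := by
    rcases Nat.eq_zero_or_pos k with h0 | hpos
    · rw [h0, List.take_zero]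
      simp [CoxeterSystem.IsReduced]
    · have := Nat.find_min hPex (show k - 1 < k by omega)
      rw [not_not] at this
      rwa [show k - 1 + 1 = k by omega] at this
  set a := ω[k] with hadef
  have htake : ω.take (k+1) = ω.take k ++ [a] := by
    rw [List.take_succ, List.getElem?_eq_getElem hklen]
    rfl
  have hπtake : π (ω.take (k+1)) = π (ω.take k) * σ a := by
    rw [htake, cs.wordProd_append, cs.wordProd_singleton]
  have hℓu : ℓ (π (ω.take k)) = k := by
    have := htk
    rwa [CoxeterSystem.IsReduced, List.length_take, min_eq_left hklen.le] at this
  have hkpos : 1 ≤ k := by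
    by_contra hcon
    have h0 : k = 0 := by omega
    apply hk
    rw [CoxeterSystem.IsReduced, hπtake, h0]
    simp only [List.take_zero, cs.wordProd_nil, one_mul, cs.length_simple, List.length_take]
    omega
  have hlt : ℓ (π (ω.take k) * σ a) < ℓ (π (ω.take k)) := by
    rcases cs.length_mul_simple (π (ω.take k)) a with h | h
    · exfalso
      apply hk
      rw [CoxeterSystem.IsReduced, hπtake, h, hℓu, List.length_take,
        min_eq_left (by omega)]
    · omega
  obtain ⟨j, hj, hex⟩ := strong_exchange_right cs (cs.isReflection_simple a) hlt
  rw [List.length_take, min_eq_left hklen.le] at hj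
  set ω' : List B := (ω.take k).eraseIdx j ++ ω.drop (k+1) with hω'def
  have hπω' : π ω' = π ω := by
    rw [hω'def, cs.wordProd_append, ← hex, ← hπtake, ← cs.wordProd_append,
      List.take_append_drop]
  have hlenω' : ω'.length < n := by
    rw [hω'def, List.length_append, List.length_eraseIdx_of_lt
      (by rw [List.length_take, min_eq_left hklen.le]; exact hj), List.length_take,
      List.length_drop, min_eq_left hklen.le]
    omega
  obtain ⟨ω'', h1, h2, h3⟩ := IH ω'.length hlenω' ω' rfl
  refine ⟨ω'', h1, h2.trans hπω', fun b hb => ?_⟩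
  have hb' := h3 b hb
  rw [hω'def, List.mem_append] at hb'
  rcases hb' with h | h
  · exact (List.take_sublist k ω).mem ((List.eraseIdx_sublist _ j).mem h)
  · exact (List.drop_sublist (k+1) ω).mem h


lemma exists_word_of_mem_parabolic {X : Set B} {x : W}
    (hx : x ∈ standardParabolic cs X) :
    ∃ ω : List B, (∀ b ∈ ω, b ∈ X) ∧ π ω = x := by
  induction hx using Subgroup.closure_induction with
  | mem y hy =>
      obtain ⟨i, hi, rfl⟩ := hy
      exact ⟨[i], by simpa using hi, by simp⟩
  | one => exact ⟨[], by simp, by simp⟩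
  | mul a b ha hb iha ihb =>
      obtain ⟨α, hα, hπα⟩ := iha
      obtain ⟨β, hβ, hπβ⟩ := ihb
      refine ⟨α ++ β, ?_, by rw [cs.wordProd_append, hπα, hπβ]⟩
      intro b hb'
      rcases List.mem_append.mp hb' with h | h
      exacts [hα _ h, hβ _ h]
  | inv a ha iha =>
      obtain ⟨α, hα, hπα⟩ := iha
      exact ⟨α.reverse, fun b hb => hα b (List.mem_reverse.mp hb),
        by rw [cs.wordProd_reverse, hπα]⟩

lemma wordProd_mem_parabolic {X : Set B} {ω : List B} (hω : ∀ b ∈ ω, b ∈ X) :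
    π ω ∈ standardParabolic cs X := by
  induction ω with
  | nil => rw [cs.wordProd_nil]; exact one_mem _
  | cons a ω ih =>
      rw [cs.wordProd_cons]
      exact mul_mem (Subgroup.subset_closure ⟨a, hω a List.mem_cons_self, rfl⟩)
        (ih fun b hb => hω b (List.mem_cons_of_mem a hb))

/-- If `d` has minimal length in the coset `d W_X`, lengths add. -/
lemma length_min_mul {X : Set B} {d : W}
    (hmin : ∀ y ∈ standardParabolic cs X, ℓ d ≤ ℓ (d * y)) :
    ∀ x ∈ standardParabolic cs X, ℓ (d * x) = ℓ d + ℓ x := by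
  have main : ∀ n x, x ∈ standardParabolic cs X → ℓ x = n → ℓ (d * x) = ℓ d + ℓ x := by
    intro n
    induction n using Nat.strong_induction_on with
    | _ n IH =>
    intro x hx hn
    obtain ⟨χ₀, hχ₀X, hπχ₀⟩ := exists_word_of_mem_parabolic cs hx
    obtain ⟨χ, hχred, hπχ, hχsub⟩ := exists_reduced_subword cs χ₀
    have hπχx : π χ = x := hπχ.trans hπχ₀
    have hχX : ∀ b ∈ χ, b ∈ X := fun b hb => hχ₀X b (hχsub b hb)
    rcases List.eq_nil_or_concat' χ with rfl | ⟨α, c, rfl⟩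
    · have hx1 : x = 1 := by rw [← hπχx, cs.wordProd_nil]
      rw [hx1, cs.length_one, mul_one, Nat.add_zero]
    · have hcX : c ∈ X := hχX c (by simp)
      have hαred : cs.IsReduced α := by
        have h := hχred.take α.length
        rwa [List.take_left] at h
      set x' := π α with hx'def
      have hx'mem : x' ∈ standardParabolic cs X :=
        wordProd_mem_parabolic cs (fun b hb => hχX b (by simp [hb]))
      have hxeq : x = x' * σ c := by
        rw [← hπχx, cs.wordProd_append, cs.wordProd_singleton, hx'def]
      have hℓx : ℓ x = α.length + 1 := by
        have h : ℓ (π (α ++ [c])) = (α ++ [c]).length := hχred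
        rw [← hπχx, h, List.length_append, List.length_singleton]
      have hℓx' : ℓ x' = α.length := hαred
      have hℓxs : ℓ (x' * σ c) = α.length + 1 := by rw [← hxeq, hℓx]
      have hIH : ℓ (d * x') = ℓ d + ℓ x' :=
        IH (ℓ x') (by omega) x' hx'mem rfl
      have hgoal : ℓ (d * x' * σ c) = ℓ (d * x') + 1 := by
        rcases cs.length_mul_simple (d * x') c with h | h
        · exact h
        · exfalso
          obtain ⟨μ, hμred, hμ⟩ := cs.exists_reduced_word' d
          have hℓd : ℓ d = μ.length := by
            have h2 : ℓ (π μ) = μ.length := hμred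
            rw [hμ, h2]
          have hword : π (μ ++ α) = d * x' := by
            rw [cs.wordProd_append, ← hμ, hx'def]
          have hlt : ℓ (π (μ ++ α) * σ c) < ℓ (π (μ ++ α)) := by
            rw [hword]
            have hpos : 1 ≤ ℓ (d * x') := by
              by_contra hc
              have h0 : ℓ (d * x') = 0 := by omega
              have h1 : d * x' = 1 := cs.length_eq_zero_iff.mp h0
              rw [h1, one_mul, cs.length_simple, cs.length_one] at h
              omega
            omega
          obtain ⟨j, hj, hex⟩ := strong_exchange_right cs (cs.isReflection_simple c) hlt
          rw [List.length_append] at hj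
          by_cases hjμ : j < μ.length
          · rw [hword, List.eraseIdx_append_of_lt_length hjμ, cs.wordProd_append] at hex
            set y : W := x' * σ c * x'⁻¹ with hydef
            have hymem : y ∈ standardParabolic cs X :=
              mul_mem (mul_mem hx'mem (Subgroup.subset_closure ⟨c, hcX, rfl⟩))
                (inv_mem hx'mem)
            have hdy : d * y = π (μ.eraseIdx j) := by
              rw [hydef, show d * (x' * σ c * x'⁻¹) = (d * x' * σ c) * x'⁻¹ by group, hex,
                hx'def, mul_assoc, mul_inv_cancel, mul_one]
            have hbound := cs.length_wordProd_le (μ.eraseIdx j)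
            rw [← hdy, List.length_eraseIdx_of_lt hjμ] at hbound
            have hge := hmin y hymem
            omega
          · push_neg at hjμ
            rw [hword, List.eraseIdx_append_of_length_le hjμ, cs.wordProd_append, ← hμ] at hex
            have hx'c : x' * σ c = π (α.eraseIdx (j - μ.length)) :=
              mul_left_cancel (show d * (x' * σ c) = d * π (α.eraseIdx (j - μ.length)) by
                rw [← mul_assoc]; exact hex)
            have hb1 := cs.length_wordProd_le (α.eraseIdx (j - μ.length))
            rw [← hx'c] at hb1
            have hb2 : (α.eraseIdx (j - μ.length)).length ≤ α.length - 1 := by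
              rw [List.length_eraseIdx_of_lt (by omega)]
            omega
      rw [hxeq, ← mul_assoc, hgoal, hIH, hℓxs, hℓx']
      omega
  exact fun x hx => main (ℓ x) x hx rfl

/-- Mirror version: if `m` has minimal length in `W_X m`, lengths add. -/
lemma length_mul_min {X : Set B} {m : W}
    (hmin : ∀ y ∈ standardParabolic cs X, ℓ m ≤ ℓ (y * m)) :
    ∀ x ∈ standardParabolic cs X, ℓ (x * m) = ℓ x + ℓ m := by
  have hmin' : ∀ y ∈ standardParabolic cs X, ℓ m⁻¹ ≤ ℓ (m⁻¹ * y) := by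
    intro y hy
    rw [cs.length_inv, show m⁻¹ * y = (y⁻¹ * m)⁻¹ by group, cs.length_inv]
    exact hmin y⁻¹ (inv_mem hy)
  intro x hx
  have h := length_min_mul cs hmin' x⁻¹ (inv_mem hx)
  rw [show m⁻¹ * x⁻¹ = (x * m)⁻¹ by group, cs.length_inv, cs.length_inv] at h
  rw [h, cs.length_inv, Nat.add_comm]


lemma proj_min {X : Set B} {w z : W} (hz : z ∈ parabolicProj cs X w) :
    ∀ y ∈ standardParabolic cs X, ℓ (z⁻¹ * w) ≤ ℓ (y * (z⁻¹ * w)) := by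
  intro y hy
  have h := hz.2 (z * y⁻¹) (mul_mem hz.1 (inv_mem hy))
  rwa [show (z * y⁻¹)⁻¹ * w = y * (z⁻¹ * w) by group] at h

lemma proj_add {X : Set B} {w z : W} (hz : z ∈ parabolicProj cs X w) :
    ∀ x ∈ standardParabolic cs X, ℓ (x * (z⁻¹ * w)) = ℓ x + ℓ (z⁻¹ * w) :=
  length_mul_min cs (proj_min cs hz)

lemma proj_dist_same {X : Set B} {w a b : W}
    (ha : a ∈ parabolicProj cs X w) (hb : b ∈ parabolicProj cs X w) :
    ℓ (a⁻¹ * b) = 0 := by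
  have hx : b⁻¹ * a ∈ standardParabolic cs X := mul_mem (inv_mem hb.1) ha.1
  have h1 := proj_add cs ha (b⁻¹ * a) hx
  rw [show (b⁻¹ * a) * (a⁻¹ * w) = b⁻¹ * w by group] at h1
  have h2 := hb.2 a ha.1
  have h3 : ℓ (b⁻¹ * a) = 0 := by omega
  rw [show a⁻¹ * b = (b⁻¹ * a)⁻¹ by group, cs.length_inv, h3]

lemma proj_dist_adj {X : Set B} {w w' : W} (hd : ℓ (w⁻¹ * w') = 1)
    {a b : W} (ha : a ∈ parabolicProj cs X w) (hb : b ∈ parabolicProj cs X w') :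
    ℓ (a⁻¹ * b) ≤ 1 := by
  obtain ⟨c, hc⟩ := cs.length_eq_one_iff.mp hd
  have hxmem : a⁻¹ * b ∈ standardParabolic cs X := mul_mem (inv_mem ha.1) hb.1
  have e1 : ℓ ((a⁻¹ * w) * σ c) = ℓ (a⁻¹ * b) + ℓ (b⁻¹ * w') := by
    have h := proj_add cs hb (a⁻¹ * b) hxmem
    rw [show (a⁻¹ * b) * (b⁻¹ * w') = a⁻¹ * w' by group] at h
    rw [show (a⁻¹ * w) * σ c = a⁻¹ * w' by rw [← hc]; group]
    exact h
  have e2 : ℓ ((b⁻¹ * w') * σ c) = ℓ (a⁻¹ * b) + ℓ (a⁻¹ * w) := by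
    have h := proj_add cs ha (b⁻¹ * a) (mul_mem (inv_mem hb.1) ha.1)
    rw [show (b⁻¹ * a) * (a⁻¹ * w) = b⁻¹ * w by group] at h
    rw [show b⁻¹ * a = (a⁻¹ * b)⁻¹ by group, cs.length_inv] at h
    rw [show (b⁻¹ * w') * σ c = b⁻¹ * w by rw [← cs.inv_simple, ← hc]; group]
    exact h
  have hb1 : ℓ ((a⁻¹ * w) * σ c) ≤ ℓ (a⁻¹ * w) + 1 := by
    rcases cs.length_mul_simple (a⁻¹ * w) c with h | h <;> omega
  have hb2 : ℓ ((b⁻¹ * w') * σ c) ≤ ℓ (b⁻¹ * w') + 1 := by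
    rcases cs.length_mul_simple (b⁻¹ * w') c with h | h <;> omega
  omega

end CoxeterBounded

/-- `W_X` has 1-bounded projections in the Cayley graph of `(W,S)`:
if `d_S(w,w') = 1` then any two points of `π_{W_X}(w) ∪ π_{W_X}(w')` are at distance
at most `1`. -/
theorem parabolic_one_bounded_projections {B : Type*} {W : Type*} [Group W]
    {M : CoxeterMatrix B} (cs : CoxeterSystem M W) (X : Set B) (w w' : W)
    (hd : cs.length (w⁻¹ * w') = 1) :
    ∀ a ∈ parabolicProj cs X w ∪ parabolicProj cs X w',
      ∀ b ∈ parabolicProj cs X w ∪ parabolicProj cs X w',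
        cs.length (a⁻¹ * b) ≤ 1 := by
  intro a ha b hb
  have hd' : cs.length (w'⁻¹ * w) = 1 := by
    rw [show w'⁻¹ * w = (w⁻¹ * w')⁻¹ by group, cs.length_inv]
    exact hd
  rcases ha with ha | ha <;> rcases hb with hb | hb
  · have := CoxeterBounded.proj_dist_same cs ha hb; omega
  · exact CoxeterBounded.proj_dist_adj cs hd ha hb
  · exact CoxeterBounded.proj_dist_adj cs hd' ha hb
  · have := CoxeterBounded.proj_dist_same cs ha hb; omega
end

section
/- Let Γ be the 1-skeleton of a locally finite CAT(0) cube complex (equivalently a median graph), and let Z ⊆ VΓ be σ-quasi-convex. Then for any adjacent vertices x,y and any z_x ∈ π_Z(x), z_y ∈ π_Z(y), one has d(z_x, z_y) ≤ 1 + 2σ; in particular Z has (1+2σ)-bounded projections. -/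
/-- The geodesic interval between `x` and `y`: vertices lying on geodesics from
`x` to `y`. -/
def interval {V : Type*} (G : SimpleGraph V) (x y : V) : Set V :=
  {m | G.dist x m + G.dist m y = G.dist x y}

/-- The closest point projection of `v` onto `Z`. -/
def graphProj {V : Type*} (G : SimpleGraph V) (Z : Set V) (v : V) : Set V :=
  {z | z ∈ Z ∧ G.dist v z = sInf {n | ∃ z' ∈ Z, G.dist v z' = n}}

/-- `Z` is `σ`-quasi-convex: every vertex on a geodesic between two points of
`Z` is within distance `σ` of `Z`. -/
def QuasiConvex {V : Type*} (G : SimpleGraph V) (Z : Set V) (σ : ℕ) : Prop :=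
  ∀ a ∈ Z, ∀ b ∈ Z, ∀ m ∈ interval G a b, ∃ z ∈ Z, G.dist m z ≤ σ

/-!
Let `m = μ(x, z_x, z_y)` and `m' = μ(y, z_x, z_y)`. Both lie on a geodesic from `z_x` to `z_y`,
so each is within `σ` of some point of `Z`. Since `m` also lies on a geodesic from `x` to its
projection `z_x`, no point of `Z` is closer to `m` than `z_x`; hence `d(m, z_x) ≤ σ`, and likewise
`d(m', z_y) ≤ σ`. The median is `1`-Lipschitz, so `d(m, m') ≤ d(x, y) = 1`, and the triangle
inequality gives `d(z_x, z_y) ≤ σ + 1 + σ`.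
-/

namespace SimpleGraph

variable {V : Type*} {G : SimpleGraph V} {Z : Set V} {x zx m z : V}

lemma interval_comm (G : SimpleGraph V) (x y : V) : interval G x y = interval G y x := by
  ext m
  change _ + _ = _ ↔ _ + _ = _
  rw [dist_comm (u := x) (v := m), dist_comm (u := m) (v := y), dist_comm (u := x) (v := y)]
  omega

lemma dist_le_of_mem_graphProj (hzx : zx ∈ graphProj G Z x) (hz : z ∈ Z) :
    G.dist x zx ≤ G.dist x z :=
  hzx.2 ▸ Nat.sInf_le ⟨z, hz, rfl⟩

lemma Connected.dist_le_of_mem_interval_of_mem_graphProj (hG : G.Connected)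
    (hzx : zx ∈ graphProj G Z x) (hm : m ∈ interval G x zx) (hz : z ∈ Z) :
    G.dist m zx ≤ G.dist m z := by
  have hgeod : G.dist x m + G.dist m zx = G.dist x zx := hm
  have := dist_le_of_mem_graphProj hzx hz
  have := hG.dist_triangle (u := x) (v := m) (w := z)
  omega

lemma Connected.dist_le_of_quasiConvex (hG : G.Connected) {σ : ℕ} (hZ : QuasiConvex G Z σ)
    {zy : V} (hzx : zx ∈ graphProj G Z x) (hzy : zy ∈ Z) (hmx : m ∈ interval G x zx)
    (hm : m ∈ interval G zx zy) : G.dist m zx ≤ σ := by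
  obtain ⟨z, hz, hmz⟩ := hZ zx hzx.1 zy hzy m hm
  exact (hG.dist_le_of_mem_interval_of_mem_graphProj hzx hmx hz).trans hmz

end SimpleGraph

open SimpleGraph in
theorem median_quasiconvex_bounded_projections_general {V : Type*} (G : SimpleGraph V)
    (hG : G.Connected) (μ : V → V → V → V)
    (hμmem : ∀ x y z : V, μ x y z ∈ interval G x y ∧ μ x y z ∈ interval G x z ∧
      μ x y z ∈ interval G y z)
    (hμlip : ∀ x x' y z : V, G.dist (μ x y z) (μ x' y z) ≤ G.dist x x')
    (Z : Set V) (σ : ℕ) (hZ : QuasiConvex G Z σ) :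
    ∀ x y : V, G.Adj x y → ∀ zx ∈ graphProj G Z x, ∀ zy ∈ graphProj G Z y,
      G.dist zx zy ≤ 1 + 2 * σ := by
  intro x y hxy zx hzx zy hzy
  obtain ⟨hmx, -, hm⟩ := hμmem x zx zy
  obtain ⟨-, hm'y, hm'⟩ := hμmem y zx zy
  set m := μ x zx zy
  set m' := μ y zx zy
  have hmzx : G.dist m zx ≤ σ := hG.dist_le_of_quasiConvex hZ hzx hzy.1 hmx hm
  have hm'zy : G.dist m' zy ≤ σ :=
    hG.dist_le_of_quasiConvex hZ hzy hzx.1 hm'y (interval_comm G zx zy ▸ hm')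
  have hmm' : G.dist m m' ≤ 1 := dist_eq_one_iff_adj.mpr hxy ▸ hμlip x y zx zy
  calc G.dist zx zy
      ≤ G.dist zx m + G.dist m zy := hG.dist_triangle
    _ ≤ G.dist m zx + (G.dist m m' + G.dist m' zy) := by
        rw [dist_comm]; exact Nat.add_le_add_left hG.dist_triangle _
    _ ≤ 1 + 2 * σ := by omega

/-- in a median graph (1-skeleton of a CAT(0) cube complex), a
`σ`-quasi-convex set `Z` has `(1+2σ)`-bounded projections: for adjacent `x, y`
and `z_x ∈ π_Z(x)`, `z_y ∈ π_Z(y)`, `d(z_x, z_y) ≤ 1 + 2σ`. -/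
theorem median_quasiconvex_bounded_projections {V : Type*} (G : SimpleGraph V)
    (hG : G.Connected) (μ : V → V → V → V)
    (hμmem : ∀ x y z : V, μ x y z ∈ interval G x y ∧ μ x y z ∈ interval G x z ∧
      μ x y z ∈ interval G y z)
    (hμuniq : ∀ x y z m : V,
      m ∈ interval G x y → m ∈ interval G x z → m ∈ interval G y z → m = μ x y z)
    (hμlip : ∀ x x' y z : V, G.dist (μ x y z) (μ x' y z) ≤ G.dist x x')
    (Z : Set V) (σ : ℕ) (hZ : QuasiConvex G Z σ) :
    ∀ x y : V, G.Adj x y → ∀ zx ∈ graphProj G Z x, ∀ zy ∈ graphProj G Z y,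
      G.dist zx zy ≤ 1 + 2 * σ :=
  median_quasiconvex_bounded_projections_general G hG μ hμmem hμlip Z σ hZ
end

section
/- Let Γ be a δ-hyperbolic graph in which every side of a geodesic triangle lies in the δ-neighborhood of the union of the other two (thin triangles). Then Γ has the falsification by fellow traveler property with a constant depending only on δ: every non-geodesic path asynchronously fellow travels (with constant depending only on δ) with a strictly shorter path with the same endpoints. -/
open SimpleGraph


open SimpleGraph

namespace FFTPAux

variable {V : Type*} {G : SimpleGraph V}

/-- Initial segment of a walk, of length `min n p.length`. -/
def mtake {u v : V} : (p : G.Walk u v) → (n : ℕ) → G.Walk u (p.getVert n)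
  | .nil, _ => .nil
  | .cons h q, 0 => Walk.nil.copy rfl ((Walk.cons h q).getVert_zero).symm
  | .cons h q, (n+1) => .cons h (mtake q n)

lemma length_mtake {u v : V} (p : G.Walk u v) (n : ℕ) :
    (mtake p n).length = min n p.length := by
  induction p generalizing n with
  | nil => simp [mtake]
  | cons h q ih =>
    cases n with
    | zero => simp [mtake]
    | succ n => simp only [mtake, Walk.length_cons, ih]; show (mtake q n).length + 1 = min (n + 1) (q.length + 1); rw [ih]; omega

lemma getVert_mtake {u v : V} (p : G.Walk u v) (n i : ℕ) :
    (mtake p n).getVert i = p.getVert (min i n) := by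
  induction p generalizing n i with
  | nil => cases n <;> rfl
  | cons h q ih =>
    cases n with
    | zero => simp [mtake, Walk.getVert]
    | succ n =>
      cases i with
      | zero => simp [mtake]
      | succ i =>
        simp only [mtake, Walk.getVert_cons_succ, ih, Nat.succ_min_succ]

lemma length_drop {u v : V} (p : G.Walk u v) (n : ℕ) :
    (p.drop n).length = p.length - n := by
  induction p generalizing n with
  | nil => simp [Walk.drop]
  | cons h q ih =>
    cases n with
    | zero => simp [Walk.drop]
    | succ n => simp only [Walk.drop, Walk.length_copy, Walk.length_cons]; show (q.drop n).length = q.length + 1 - (n + 1); rw [ih]; omega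

lemma getVert_drop {u v : V} (p : G.Walk u v) (n i : ℕ) :
    (p.drop n).getVert i = p.getVert (n + i) := by
  induction p generalizing n i with
  | nil => cases n <;> rfl
  | cons h q ih =>
    cases n with
    | zero => simp [Walk.drop]
    | succ n =>
      simp only [Walk.drop, Walk.getVert_copy, ih, Walk.getVert_cons_succ, Nat.succ_add]

lemma getVert_clamp {u v : V} (p : G.Walk u v) (i : ℕ) :
    p.getVert i = p.getVert (min i p.length) := by
  rcases le_total i p.length with h | h
  · rw [min_eq_left h]
  · rw [min_eq_right h, p.getVert_of_length_le h, p.getVert_length]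

lemma dist_getVert_le {u v : V} (p : G.Walk u v) {s t : ℕ} (h : s ≤ t) :
    G.dist (p.getVert s) (p.getVert t) ≤ t - s := by
  have h1 := SimpleGraph.dist_le (mtake (p.drop s) (t - s))
  rw [length_mtake, length_drop] at h1
  rw [getVert_drop, Nat.add_sub_cancel' h] at h1
  exact le_trans h1 (min_le_left _ _)

end FFTPAux

open FFTPAux

/-- Asynchronous `M`-fellow traveling of walks with the same start. -/
def AsyncFellowTravel {V : Type*} (G : SimpleGraph V) (M : ℕ) {a b c : V}
    (p : G.Walk a b) (q : G.Walk a c) : Prop :=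
  ∃ φ ψ : ℕ → ℕ, Monotone φ ∧ Monotone ψ ∧
    (∀ t, G.dist (p.getVert t) (q.getVert (φ t)) ≤ M) ∧
    (∀ t, G.dist (p.getVert (ψ t)) (q.getVert t) ≤ M)

/-- `δ`-thin triangles: each side of a geodesic triangle lies in the
`δ`-neighborhood of the union of the other two sides. -/
def ThinTriangles {V : Type*} (G : SimpleGraph V) (δ : ℕ) : Prop :=
  ∀ (a b c : V) (p : G.Walk a b) (q : G.Walk b c) (r : G.Walk a c),
    p.length = G.dist a b → q.length = G.dist b c → r.length = G.dist a c →
    ∀ i : ℕ, ∃ j : ℕ,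
      G.dist (r.getVert i) (p.getVert j) ≤ δ ∨ G.dist (r.getVert i) (q.getVert j) ≤ δ

/-- a `δ`-hyperbolic graph has the falsification by fellow
traveler property with a constant depending only on `δ`: every non-geodesic
path asynchronously fellow travels (with constant depending only on `δ`) with a
strictly shorter path with the same endpoints. -/
theorem fftp_of_hyperbolic :
    ∃ M : ℕ → ℕ, ∀ (V : Type) (G : SimpleGraph V) (δ : ℕ), G.Connected →
      ThinTriangles G δ →
      ∀ (u v : V) (p : G.Walk u v), p.length ≠ G.dist u v →
        ∃ q : G.Walk u v, q.length < p.length ∧ AsyncFellowTravel G (M δ) p q := by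

  classical
  refine ⟨fun δ => 2 * δ + 2, ?_⟩
  intro V G δ hconn hthin u v p hp
  have hdlt : G.dist u v < p.length := lt_of_le_of_ne (SimpleGraph.dist_le p) (Ne.symm hp)
  have hPex : ∃ j, G.dist u (p.getVert j) < min j p.length := by
    refine ⟨p.length, ?_⟩
    simpa [p.getVert_length] using hdlt
  set j₀ := Nat.find hPex with hj₀def
  have hj₀ : G.dist u (p.getVert j₀) < min j₀ p.length := Nat.find_spec hPex
  have hj₀le : j₀ ≤ p.length := Nat.find_le (by simpa [p.getVert_length] using hdlt)
  have hpre : ∀ i, i < j₀ → G.dist u (p.getVert i) = i := by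
    intro i hi
    have h1 : G.dist u (p.getVert i) ≤ i := by
      have := dist_getVert_le p (Nat.zero_le i)
      rwa [p.getVert_zero, Nat.sub_zero] at this
    have h2 : ¬ (G.dist u (p.getVert i) < min i p.length) := Nat.find_min hPex hi
    have hile : i ≤ p.length := le_trans (le_of_lt hi) hj₀le
    omega
  set x := p.getVert j₀ with hx
  set d := G.dist u x with hd
  have hdj : d < j₀ := lt_of_lt_of_le hj₀ (min_le_left _ _)
  obtain ⟨r, hr⟩ := hconn.exists_walk_length_eq_dist u x
  rw [← hd] at hr
  have hrd : r.getVert d = x := by rw [← hr, r.getVert_length]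
  have hrpre : ∀ k, k ≤ d → G.dist u (r.getVert k) = k := by
    intro k hk
    have h1 : G.dist u (r.getVert k) ≤ k := by
      have := dist_getVert_le r (Nat.zero_le k)
      rwa [r.getVert_zero, Nat.sub_zero] at this
    have h2 : G.dist (r.getVert k) x ≤ d - k := by
      have := dist_getVert_le r (show k ≤ r.length by omega)
      rwa [r.getVert_length, hr] at this
    have h3 : d ≤ G.dist u (r.getVert k) + G.dist (r.getVert k) x :=
      hconn.dist_triangle
    omega
  -- key estimate: p and the geodesic r fellow travel up to index j₀
  have key : ∀ i, i ≤ j₀ → G.dist (p.getVert i) (r.getVert i) ≤ 2 * δ + 2 := by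
    intro i hi
    rcases eq_or_lt_of_le hi with hieq | hilt
    · rw [r.getVert_of_length_le (show r.length ≤ i by omega), hieq, ← hx]
      simp [SimpleGraph.dist_self]
    · set c := p.getVert (j₀ - 1) with hc
      have hcdist : G.dist u c = j₀ - 1 := hpre _ (by omega)
      obtain ⟨s, hs⟩ := hconn.exists_walk_length_eq_dist x c
      have hxc : G.dist x c ≤ 1 := by
        have := dist_getVert_le p (show j₀ - 1 ≤ j₀ by omega)
        rw [← hc, ← hx] at this
        rw [SimpleGraph.dist_comm]
        omega
      have hp1len : (mtake p (j₀ - 1)).length = G.dist u c := by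
        rw [length_mtake, hcdist]; omega
      obtain ⟨j, hj⟩ := hthin u x c r s (mtake p (j₀ - 1)) hr hs hp1len i
      have hmti : (mtake p (j₀ - 1)).getVert i = p.getVert i := by
        rw [getVert_mtake]; congr 1; omega
      rw [hmti] at hj
      have hmain : ∃ j', j' ≤ d ∧ G.dist (p.getVert i) (r.getVert j') ≤ δ + 1 := by
        rcases hj with h | h
        · refine ⟨min j d, min_le_right _ _, ?_⟩
          have hcl : r.getVert j = r.getVert (min j d) := by
            rw [getVert_clamp r j, hr]
          rw [hcl] at h
          omega
        · refine ⟨d, le_rfl, ?_⟩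
          have h2 : G.dist x (s.getVert j) ≤ 1 := by
            have h3 := dist_getVert_le s (Nat.zero_le (min j s.length))
            rw [s.getVert_zero, Nat.sub_zero] at h3
            rw [getVert_clamp s j]
            have : min j s.length ≤ s.length := min_le_right _ _
            omega
          have h4 : G.dist (p.getVert i) x ≤
              G.dist (p.getVert i) (s.getVert j) + G.dist (s.getVert j) x :=
            hconn.dist_triangle
          rw [SimpleGraph.dist_comm (u := x)] at h2
          rw [hrd]
          omega
      obtain ⟨j', hj'd, hj'⟩ := hmain
      have hipre : G.dist u (p.getVert i) = i := hpre i hilt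
      have ht1 : G.dist u (p.getVert i) ≤ G.dist u (r.getVert j') + G.dist (r.getVert j') (p.getVert i) :=
        hconn.dist_triangle
      have ht2 : G.dist u (r.getVert j') ≤ G.dist u (p.getVert i) + G.dist (p.getVert i) (r.getVert j') :=
        hconn.dist_triangle
      have hcomm : G.dist (r.getVert j') (p.getVert i) = G.dist (p.getVert i) (r.getVert j') :=
        SimpleGraph.dist_comm
      have hj'pre : G.dist u (r.getVert j') = j' := hrpre j' hj'd
      have h5 : G.dist (r.getVert j') (r.getVert (min i d)) ≤ δ + 1 := by
        rcases le_total j' (min i d) with hle | hle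
        · have := dist_getVert_le r hle
          omega
        · have := dist_getVert_le r hle
          rw [SimpleGraph.dist_comm (u := r.getVert (min i d))] at this
          omega
      have h6 : r.getVert i = r.getVert (min i d) := by
        rw [getVert_clamp r i, hr]
      have h7 : G.dist (p.getVert i) (r.getVert (min i d)) ≤
          G.dist (p.getVert i) (r.getVert j') + G.dist (r.getVert j') (r.getVert (min i d)) :=
        hconn.dist_triangle
      rw [h6]
      omega
  -- the shorter fellow-traveling walk
  refine ⟨r.append (p.drop j₀), ?_, ?_⟩
  · rw [Walk.length_append, length_drop, hr]
    omega
  · have hq : ∀ k, (r.append (p.drop j₀)).getVert k =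
        if k ≤ d then r.getVert k else p.getVert (k + (j₀ - d)) := by
      intro k
      rw [Walk.getVert_append, hr]
      by_cases h1 : k < d
      · rw [if_pos h1, if_pos (le_of_lt h1)]
      · rw [if_neg h1, getVert_drop]
        by_cases h2 : k ≤ d
        · have hk : k = d := by omega
          subst hk
          rw [if_pos h2, Nat.sub_self, Nat.add_zero, ← hx, hrd]
        · rw [if_neg h2]; congr 1; omega
    refine ⟨fun t => max (min t d) (t - (j₀ - d)),
            fun t => if t ≤ d then t else t + (j₀ - d), ?_, ?_, ?_, ?_⟩
    · intro a b hab
      exact max_le_max (min_le_min hab le_rfl) (Nat.sub_le_sub_right hab _)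
    · intro a b hab
      dsimp only
      split <;> split <;> omega
    · intro t
      dsimp only
      rw [hq]
      by_cases ht : t ≤ j₀
      · have hφ : max (min t d) (t - (j₀ - d)) = min t d := by omega
        rw [hφ, if_pos (min_le_right _ _)]
        have hcl : r.getVert (min t d) = r.getVert t := by
          rw [getVert_clamp r t, hr]
        rw [hcl]
        exact key t ht
      · have hφ : max (min t d) (t - (j₀ - d)) = t - (j₀ - d) := by omega
        rw [hφ, if_neg (by omega)]
        have hidx : t - (j₀ - d) + (j₀ - d) = t := by omega
        rw [hidx]
        simp [SimpleGraph.dist_self]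
    · intro t
      dsimp only
      rw [hq]
      by_cases ht : t ≤ d
      · rw [if_pos ht, if_pos ht]
        exact key t (by omega)
      · rw [if_neg ht, if_neg ht]
        simp [SimpleGraph.dist_self]
end
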